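/- Let 𝒜 be a complete simplicial category, V a finitely presentable simplicial set, B an object of 𝒜, and n ≥ 0. Then in P(𝒜) there is an isomorphism (V ⊗ hom(−,B))^{Δ_n} ≅ V^{Δ_n} ⊗ hom(−, B^{Δ_n}), where (−)^{Δ_n} denotes cotensor with the simplicial n-simplex Δ_n and ⊗ denotes tensor with a simplicial set. -/

import Mathlib

/-!
Common definitions for formalizing "Class-combinatorial model categories"
(Chorny–Rosický). We set up: cardinal-filtered categories, (class-)presentable
objects, class-accessible and locally class-presentable categories, strongly
class-accessible functors, cone-coreflective classes, transfinite compositions,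
cofibrant closures, weak factorization systems, (class-combinatorial) model
structures, the Quillen homotopy-theoretic notions for simplicial sets, and
small simplicial presheaves.
-/

universe w v' v u' u

open CategoryTheory CategoryTheory.Limits CategoryTheory.SimplicialCategory
  Opposite Simplicial MonoidalCategory

noncomputable section

namespace Paper

/-! ### Cardinal-filtered categories, presentable objects, class-accessibility -/

/-- A small category `J` is `κ`-filtered if every diagram in `J` indexed by a category
having fewer than `κ` morphisms admits a cocone. -/
def IsCardinalFiltered (J : Type v) [SmallCategory J] (κ : Cardinal.{v}) : Prop :=
  ∀ (D : Type v) [SmallCategory D],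
    Cardinal.mk (Σ p : D × D, p.1 ⟶ p.2) < κ → ∀ F : D ⥤ J, Nonempty (Cocone F)

section Accessibility

variable {K : Type u} [Category.{v} K] {L : Type u'} [Category.{v} L]

/-- An object `X` is `κ`-presentable if its hom-functor preserves `κ`-filtered colimits. -/
def IsPresentable (κ : Cardinal.{v}) (X : K) : Prop :=
  ∀ (J : Type v) [SmallCategory J], IsCardinalFiltered J κ →
    ∀ F : J ⥤ K, Nonempty (PreservesColimit F (coyoneda.obj (op X)))

variable (K) in
/-- `K` has colimits of all `κ`-filtered (small) diagrams. -/
def HasCardinalFilteredColimits (κ : Cardinal.{v}) : Prop :=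
  ∀ (J : Type v) [SmallCategory J], IsCardinalFiltered J κ → HasColimitsOfShape J K

/-- `X` is (isomorphic to) the colimit of a `κ`-filtered diagram of objects
belonging to the class `S`. -/
def IsCardinalFilteredColimitOf (κ : Cardinal.{v}) (S : K → Prop) (X : K) : Prop :=
  ∃ (J : Type v) (_ : SmallCategory J) (F : J ⥤ K) (c : Cocone F),
    IsCardinalFiltered J κ ∧ Nonempty (IsColimit c) ∧ Nonempty (c.pt ≅ X) ∧
      ∀ j, S (F.obj j)

variable (K) in
/-- A category is class-`κ`-accessible if it has `κ`-filtered colimits and there is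
a class of `κ`-presentable objects such that every object is a `κ`-filtered colimit
of objects from that class. -/
def IsClassAccessible (κ : Cardinal.{v}) : Prop :=
  κ.IsRegular ∧ HasCardinalFilteredColimits K κ ∧
    ∃ S : K → Prop, (∀ X, S X → IsPresentable κ X) ∧
      ∀ X : K, IsCardinalFilteredColimitOf κ S X

variable (K) in
/-- A category is locally class-`κ`-presentable if it is class-`κ`-accessible and complete. -/
def IsLocallyClassPresentable (κ : Cardinal.{v}) : Prop :=
  IsClassAccessible K κ ∧ HasLimitsOfSize.{v, v} K

/-- A functor preserves `κ`-filtered colimits. -/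
def PreservesCardinalFilteredColimits (F : K ⥤ L) (κ : Cardinal.{v}) : Prop :=
  ∀ (J : Type v) [SmallCategory J], IsCardinalFiltered J κ →
    Nonempty (PreservesColimitsOfShape J F)

/-- A functor is strongly class-`κ`-accessible if it preserves `κ`-filtered colimits
and `κ`-presentable objects. -/
def IsStronglyClassAccessible (F : K ⥤ L) (κ : Cardinal.{v}) : Prop :=
  PreservesCardinalFilteredColimits F κ ∧
    ∀ X : K, IsPresentable κ X → IsPresentable κ (F.obj X)

/-- A class of objects is closed under `κ`-filtered colimits. -/
def ClosedUnderCardinalFilteredColimits (S : K → Prop) (κ : Cardinal.{v}) : Prop :=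
  ∀ (J : Type v) [SmallCategory J], IsCardinalFiltered J κ →
    ∀ (F : J ⥤ K) (c : Cocone F), IsColimit c → (∀ j, S (F.obj j)) → S c.pt

/-- A full subcategory is strongly class-`κ`-accessibly embedded if it is closed under
`κ`-filtered colimits and the inclusion preserves `κ`-presentable objects. -/
def IsStronglyClassAccessiblyEmbedded (S : K → Prop) (κ : Cardinal.{v}) : Prop :=
  ClosedUnderCardinalFilteredColimits S κ ∧
    ∀ X : ObjectProperty.FullSubcategory S, IsPresentable κ X → IsPresentable κ X.obj

/-- A full subcategory which is class-`κ`-accessible and strongly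
class-`κ`-accessibly embedded. -/
def IsClassAccessibleSubcategory (S : K → Prop) (κ : Cardinal.{v}) : Prop :=
  IsClassAccessible (ObjectProperty.FullSubcategory S) κ ∧ IsStronglyClassAccessiblyEmbedded S κ

end Accessibility

/-- The sharp ordering `λ ⊴ μ` on regular cardinals (set-theoretic characterization):
`λ ≤ μ` and for every set `X` of cardinality `< μ` there is a family, of cardinality
`< μ`, of subsets of `X` of cardinality `< λ` which is cofinal among all subsets
of `X` of cardinality `< λ`. -/
def SharplyLE (lam mu : Cardinal.{v}) : Prop :=
  lam ≤ mu ∧ ∀ X : Type v, Cardinal.mk X < mu →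
    ∃ T : Set (Set X), Cardinal.mk T < mu ∧ (∀ t ∈ T, Cardinal.mk t < lam) ∧
      ∀ s : Set X, Cardinal.mk s < lam → ∃ t ∈ T, s ⊆ t

end Paper
section
namespace Paper

/-! ### Classes of morphisms, weak factorization systems, model structures -/

section Morphisms

variable {K : Type u} [Category.{v} K]

/-- Right lifting property with respect to a class of morphisms. -/
def rlpOf (I : MorphismProperty K) : MorphismProperty K :=
  fun _ _ p => ∀ ⦃A B : K⦄ (i : A ⟶ B), I i → HasLiftingProperty i p

/-- Left lifting property with respect to a class of morphisms. -/
def llpOf (I : MorphismProperty K) : MorphismProperty K :=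
  fun _ _ i => ∀ ⦃X Y : K⦄ (p : X ⟶ Y), I p → HasLiftingProperty i p

/-- `(L, R)` is a weak factorization system. -/
structure IsWeakFactorizationSystem (L R : MorphismProperty K) : Prop where
  factor : ∀ {X Y : K} (f : X ⟶ Y),
    ∃ (Z : K) (g : X ⟶ Z) (h : Z ⟶ Y), L g ∧ R h ∧ g ≫ h = f
  left_eq : L = llpOf R
  right_eq : R = rlpOf L

/-- `X` is a retract of `Y`. -/
def IsRetractOf {C : Type u'} [Category.{v'} C] (X Y : C) : Prop :=
  ∃ (i : X ⟶ Y) (r : Y ⟶ X), i ≫ r = 𝟙 X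

/-- A class of morphisms is closed under retracts (in the arrow category). -/
def ClosedUnderRetracts (P : MorphismProperty K) : Prop :=
  ∀ f g : Arrow K, IsRetractOf f g → P g.hom → P f.hom

/-- A class of morphisms is closed under pushout. -/
def ClosedUnderPushouts (P : MorphismProperty K) : Prop :=
  ∀ ⦃A B A' B' : K⦄ (g : A ⟶ A') (f : A ⟶ B) (f' : A' ⟶ B') (g' : B ⟶ B'),
    IsPushout g f f' g' → P f → P f'

/-- The diagram, indexed by the elements below `j`, obtained by restricting `F`. -/
def chainDiagram {γ : Type w} [Preorder γ] (F : γ ⥤ K) (j : γ) : ↥(Set.Iio j) ⥤ K :=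
  (show Monotone (Subtype.val : Set.Iio j → γ) from fun _ _ h => h).functor ⋙ F

/-- The canonical cocone on `chainDiagram F j` with vertex `F.obj j`. -/
def chainCocone {γ : Type w} [Preorder γ] (F : γ ⥤ K) (j : γ) : Cocone (chainDiagram F j) where
  pt := F.obj j
  ι :=
    { app := fun i => F.map (homOfLE (le_of_lt i.2))
      naturality := fun i i' h => by
        dsimp [chainDiagram]
        rw [Category.comp_id]
        exact (F.map_comp _ _).symm.trans (congrArg F.map (Subsingleton.elim _ _)) }

/-- `f` is a transfinite composition of morphisms from `I`: there is a smooth chain,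
indexed by a well-ordered set, whose successor steps lie in `I`, which converges to `f`. -/
def IsTransfiniteCompositionOf (I : MorphismProperty K) {X Y : K} (f : X ⟶ Y) : Prop :=
  ∃ (γ : Type v) (_ : LinearOrder γ) (_ : IsWellOrder γ (· < ·)) (_ : OrderBot γ)
    (_ : SuccOrder γ) (F : γ ⥤ K) (c : Cocone F) (_ : IsColimit c),
      (∀ j : γ, ¬IsMax j → I (F.map (homOfLE (Order.le_succ j)))) ∧
      (∀ j : γ, Order.IsSuccLimit j → Nonempty (IsColimit (chainCocone F j))) ∧
      ∃ (e₀ : X ≅ F.obj ⊥) (e₁ : c.pt ≅ Y), f = e₀.hom ≫ c.ι.app ⊥ ≫ e₁.hom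

/-- A class of morphisms is closed under transfinite composition. -/
def ClosedUnderTransfiniteComposition (P : MorphismProperty K) : Prop :=
  ∀ ⦃X Y : K⦄ (f : X ⟶ Y), IsTransfiniteCompositionOf P f → P f

/-- A class is closed under pushout, transfinite composition and retracts. -/
def IsCofClosed (P : MorphismProperty K) : Prop :=
  ClosedUnderPushouts P ∧ ClosedUnderTransfiniteComposition P ∧ ClosedUnderRetracts P

/-- `cofClosure I` is the closure of `I` under pushout, transfinite composition and
retracts, i.e. the smallest such class containing `I`. -/
def cofClosure (I : MorphismProperty K) : MorphismProperty K :=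
  fun _ _ f => ∀ P : MorphismProperty K, I ≤ P → IsCofClosed P → P f

/-- A class `C` of morphisms is cone-coreflective if for each morphism `f` there is a
(small) subset `C_f ⊆ C` such that every morphism `g → f` of the arrow category with
`g ∈ C` factors as `g → h → f` with `h ∈ C_f`. -/
def IsConeCoreflective (C : MorphismProperty K) : Prop :=
  ∀ ⦃X Y : K⦄ (f : X ⟶ Y), ∃ Cf : Set (Arrow K), Small.{v} ↥Cf ∧
    (∀ h ∈ Cf, C h.hom) ∧
    ∀ ⦃A B : K⦄ (g : A ⟶ B), C g → ∀ u : Arrow.mk g ⟶ Arrow.mk f,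
      ∃ h ∈ Cf, ∃ (p : Arrow.mk g ⟶ h) (q : h ⟶ Arrow.mk f), p ≫ q = u

/-- All morphisms of `I` have `κ`-presentable domains and codomains. -/
def HasBoundedDomains (I : MorphismProperty K) (κ : Cardinal.{v}) : Prop :=
  ∀ ⦃A B : K⦄ (f : A ⟶ B), I f → IsPresentable κ A ∧ IsPresentable κ B

/-- Every morphism between `κ`-presentable objects has an `(L, R)`-factorization with
`κ`-presentable middle object. -/
def HasBoundedFactorizations (L R : MorphismProperty K) (κ : Cardinal.{v}) : Prop :=
  ∀ ⦃A B : K⦄ (f : A ⟶ B), IsPresentable κ A → IsPresentable κ B →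
    ∃ (Z : K) (g : A ⟶ Z) (h : Z ⟶ B),
      L g ∧ R h ∧ g ≫ h = f ∧ IsPresentable κ Z

/-- A class `I` of morphisms is `κ`-bounded: it is cone-coreflective, its morphisms have
`κ`-presentable domains and codomains, and morphisms between `κ`-presentable objects
have weak factorizations (into `cof I` followed by `I^□`) with `κ`-presentable middle
objects. -/
def IsBounded (I : MorphismProperty K) (κ : Cardinal.{v}) : Prop :=
  IsConeCoreflective I ∧ HasBoundedDomains I κ ∧
    HasBoundedFactorizations (cofClosure I) (rlpOf I) κ

/-- A weak factorization system `(L, R)` is cofibrantly class-`κ`-generated: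
`L = cof(C)` for a cone-coreflective class `C` of morphisms with `κ`-presentable
domains and codomains, and every morphism between `κ`-presentable objects has a weak
factorization with `κ`-presentable middle object. -/
def IsCofibrantlyClassGenerated (L R : MorphismProperty K) (κ : Cardinal.{v}) : Prop :=
  IsWeakFactorizationSystem L R ∧
    ∃ C : MorphismProperty K, IsConeCoreflective C ∧ HasBoundedDomains C κ ∧
      L = cofClosure C ∧ HasBoundedFactorizations L R κ

/-- A model structure on a category: classes of weak equivalences, cofibrations and
fibrations satisfying the axioms of a (closed) model category. -/
structure ModelStructure (K : Type u) [Category.{v} K] : Type (max u (v + 1)) where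
  weq : MorphismProperty K
  cofib : MorphismProperty K
  fib : MorphismProperty K
  weq_two_of_three : weq.HasTwoOutOfThreeProperty
  weq_retracts : ClosedUnderRetracts weq
  wfs_cof_tfib : IsWeakFactorizationSystem cofib (fun _ _ f => fib f ∧ weq f)
  wfs_tcof_fib : IsWeakFactorizationSystem (fun _ _ f => cofib f ∧ weq f) fib

/-- The class of trivial fibrations. -/
def ModelStructure.trivFib (M : ModelStructure K) : MorphismProperty K :=
  fun _ _ f => M.fib f ∧ M.weq f

/-- The class of trivial cofibrations. -/
def ModelStructure.trivCof (M : ModelStructure K) : MorphismProperty K :=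
  fun _ _ f => M.cofib f ∧ M.weq f

/-- A model structure is class-`λ`-combinatorial if the underlying category is locally
class-`λ`-presentable and both weak factorization systems are cofibrantly
class-`μ`-generated for every regular cardinal `μ ⊵ λ`. -/
structure IsClassCombinatorial (M : ModelStructure K) (lam : Cardinal.{v}) : Prop where
  regular : lam.IsRegular
  locallyPresentable : IsLocallyClassPresentable K lam
  cof_generated : ∀ mu : Cardinal.{v}, mu.IsRegular → SharplyLE lam mu →
    IsCofibrantlyClassGenerated M.cofib M.trivFib mu
  tcof_generated : ∀ mu : Cardinal.{v}, mu.IsRegular → SharplyLE lam mu →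
    IsCofibrantlyClassGenerated M.trivCof M.fib mu

/-- A class-combinatorial model category is nice if its weak equivalences form a
class-accessible, strongly class-accessibly embedded full subcategory of the arrow
category. -/
def ModelStructure.IsNice (M : ModelStructure K) : Prop :=
  ∃ κ : Cardinal.{v}, IsClassAccessibleSubcategory (fun g : Arrow K => M.weq g.hom) κ

/-- Fibrant object (the map to the terminal object is a fibration). -/
def IsFibrantObj [HasTerminal K] (M : ModelStructure K) (X : K) : Prop :=
  M.fib (terminal.from X)

/-- Cofibrant object (the map from the initial object is a cofibration). -/
def IsCofibrantObj [HasInitial K] (M : ModelStructure K) (X : K) : Prop :=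
  M.cofib (initial.to X)

/-- Left properness: the pushout of a weak equivalence along a cofibration is a weak
equivalence. -/
def IsLeftProper (M : ModelStructure K) : Prop :=
  ∀ ⦃A A' B B' : K⦄ (c : A ⟶ A') (w : A ⟶ B) (w' : A' ⟶ B') (c' : B ⟶ B'),
    IsPushout c w w' c' → M.cofib c → M.weq w → M.weq w'

/-- Right properness: the pullback of a weak equivalence along a fibration is a weak
equivalence. -/
def IsRightProper (M : ModelStructure K) : Prop :=
  ∀ ⦃P X Y Z : K⦄ (w' : P ⟶ X) (p' : P ⟶ Y) (p : X ⟶ Z) (w : Y ⟶ Z),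
    IsPullback w' p' p w → M.fib p → M.weq w → M.weq w'

/-- `L`-equivalences: the morphisms sent by `L` to weak equivalences. -/
def lEq (M : ModelStructure K) (L : K ⥤ K) : MorphismProperty K :=
  fun _ _ h => M.weq (L.map h)

/-- `L`-fibrations: the morphisms with the right lifting property with respect to all
cofibrations which are `L`-equivalences. -/
def lFib (M : ModelStructure K) (L : K ⥤ K) : MorphismProperty K :=
  rlpOf (fun _ _ i => M.cofib i ∧ lEq M L i)

/-- A functor `L` with a natural transformation `η : Id → L` is homotopy idempotent:
`L η_K` and `η_{L K}` are weak equivalences for every `K`. -/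
def IsHomotopyIdempotent (M : ModelStructure K) (L : K ⥤ K) (η : 𝟭 K ⟶ L) : Prop :=
  ∀ X : K, M.weq (L.map (η.app X)) ∧ M.weq (η.app (L.obj X))

end Morphisms

end Paper
end
section
namespace Paper

/-! ### Homotopy theory of simplicial sets -/

noncomputable instance : MonoidalClosed SSet.{v} :=
  inferInstanceAs (MonoidalClosed (SimplexCategoryᵒᵖ ⥤ Type v))

/-- The vertex `i` of `Δ[1]`, as a morphism from the monoidal unit. -/
def vertex (i : Fin 2) : 𝟙_ SSet.{v} ⟶ Δ[1] :=
  (SSet.unitHomEquiv _).symm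
    (SSet.stdSimplex.objEquiv.symm (SimplexCategory.const ⦋0⦌ ⦋1⦌ i))

/-- The end inclusion `A ⟶ A ⊗ Δ[1]` at the vertex `i`. -/
def cylIncl (A : SSet.{v}) (i : Fin 2) : A ⟶ A ⊗ Δ[1] :=
  (ρ_ A).inv ≫ (A ◁ vertex i)

/-- Elementary simplicial homotopy between two maps of simplicial sets. -/
def ElemHomotopic {A K : SSet.{v}} (f g : A ⟶ K) : Prop :=
  ∃ H : A ⊗ Δ[1] ⟶ K, cylIncl A 0 ≫ H = f ∧ cylIncl A 1 ≫ H = g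

/-- Simplicial homotopy: the equivalence relation generated by elementary homotopies. -/
def Homotopic {A K : SSet.{v}} (f g : A ⟶ K) : Prop :=
  Relation.EqvGen ElemHomotopic f g

/-- Weak equivalences of simplicial sets: morphisms inducing bijections on simplicial
homotopy classes of maps into every Kan complex. -/
def WeakEquiv : MorphismProperty SSet.{v} := fun X Y f =>
  ∀ K : SSet.{v}, SSet.KanComplex K →
    (∀ a : X ⟶ K, ∃ b : Y ⟶ K, Homotopic (f ≫ b) a) ∧
    (∀ b b' : Y ⟶ K, Homotopic (f ≫ b) (f ≫ b') → Homotopic b b')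

/-- Kan fibrations of simplicial sets. -/
def sFib : MorphismProperty SSet.{v} := fun _ _ p =>
  ∀ (n : ℕ) (i : Fin (n + 1)), HasLiftingProperty (SSet.horn n i).ι p

/-- Cofibrations of simplicial sets (monomorphisms). -/
def sCof : MorphismProperty SSet.{v} := fun _ _ i => Mono i

/-! ### Simplicial categories: simplicial functors, tensors and cotensors -/

section Simplicial

variable {C : Type u} [Category.{v} C] [SimplicialCategory C]
variable {D : Type u'} [Category.{v} D] [SimplicialCategory D]

/-- A functor between simplicial categories is simplicial if it extends to an
`SSet`-enriched functor. -/
def IsSimplicialFunctor (E : C ⥤ D) : Prop :=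
  ∃ τ : ∀ X Y : C, sHom X Y ⟶ sHom (E.obj X) (E.obj Y),
    (∀ X : C, eId SSet X ≫ τ X X = eId SSet (E.obj X)) ∧
    (∀ X Y Z : C, eComp SSet X Y Z ≫ τ X Z =
      (τ X Y ⊗ₘ τ Y Z) ≫ eComp SSet (E.obj X) (E.obj Y) (E.obj Z)) ∧
    (∀ (X Y : C) (f : X ⟶ Y), eHomEquiv SSet (E.map f) = eHomEquiv SSet f ≫ τ X Y)

/-- The contravariant action of the enriched hom: for `f : A ⟶ B` and `K`, the induced
map `hom(f, K) : sHom B K ⟶ sHom A K`. -/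
def sHomPre {A B : C} (f : A ⟶ B) (K : C) : sHom B K ⟶ sHom A K :=
  ((sHomFunctor C).map f.op).app K

/-- The covariant action of the enriched hom. -/
def sHomPost (A : C) {X Y : C} (p : X ⟶ Y) : sHom A X ⟶ sHom A Y :=
  ((sHomFunctor C).obj (op A)).map p

/-- The pullback-corner map `sHom B X ⟶ sHom A X ×_{sHom A Y} sHom B Y` associated to
`i : A ⟶ B` and `p : X ⟶ Y`. -/
def pullbackCorner {A B X Y : C} (i : A ⟶ B) (p : X ⟶ Y) :
    sHom B X ⟶ pullback (sHomPost A p) (sHomPre i Y) :=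
  pullback.lift (sHomPre i X) (sHomPost B p)
    (((sHomFunctor C).map i.op).naturality p).symm

/-- Cotensors (powers) by simplicial sets in a simplicial category, with the enriched
universal property `sHom X (A^S) ≅ sHom X A ^ S`, naturally in `X`. -/
class SCotensors (C : Type u) [Category.{v} C] [SimplicialCategory C] where
  cotensor : SSet.{v} → C → C
  iso : ∀ (S : SSet.{v}) (A : C),
    (sHomFunctor C).flip.obj (cotensor S A) ≅ (sHomFunctor C).flip.obj A ⋙ ihom S

end Simplicial

/-! ### Small simplicial presheaves -/

section Presheaves

variable {A : Type u} [Category.{v} A] [SimplicialCategory A]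

/-- The simplicial presheaf represented by an object. -/
def representable (a : A) : Aᵒᵖ ⥤ SSet.{v} :=
  (sHomFunctor A).flip.obj a

/-- A simplicial presheaf is small if it lies in the closure of the representables
under small weighted colimits, i.e. in the closure of the representables under
small conical colimits and tensors with simplicial sets (up to isomorphism). -/
def IsSmallPresheaf (F : Aᵒᵖ ⥤ SSet.{v}) : Prop :=
  ∀ P : (Aᵒᵖ ⥤ SSet.{v}) → Prop,
    (∀ a : A, P (representable a)) →
    (∀ (S : SSet.{v}) (G : Aᵒᵖ ⥤ SSet.{v}), P G → P (G ⋙ tensorLeft S)) →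
    (∀ (J : Type v) [SmallCategory J] (D : J ⥤ (Aᵒᵖ ⥤ SSet.{v})) (c : Cocone D),
      IsColimit c → (∀ j, P (D.obj j)) → P c.pt) →
    (∀ G G' : Aᵒᵖ ⥤ SSet.{v}, P G → Nonempty (G ≅ G') → P G') →
    P F

variable (A) in
/-- The category `P(A)` of small simplicial presheaves on `A`. -/
def SmallPresheaf : Type max u (v + 1) :=
  ObjectProperty.FullSubcategory (IsSmallPresheaf (A := A))

noncomputable instance : Category.{max u v} (SmallPresheaf A) :=
  inferInstanceAs (Category (ObjectProperty.FullSubcategory (IsSmallPresheaf (A := A))))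

/-- Levelwise weak equivalences of small simplicial presheaves (the weak equivalences
of the projective model structure). -/
def LevelwiseWeq : MorphismProperty (SmallPresheaf A) :=
  fun _ _ α => ∀ X : Aᵒᵖ, WeakEquiv (α.hom.app X)

/-- Levelwise (Kan) fibrations of small simplicial presheaves (the fibrations of the
projective model structure). -/
def LevelwiseFib : MorphismProperty (SmallPresheaf A) :=
  fun _ _ α => ∀ X : Aᵒᵖ, sFib (α.hom.app X)

/-- Levelwise fibrant (= projectively fibrant) presheaves. -/
def LevelwiseKan (F : Aᵒᵖ ⥤ SSet.{v}) : Prop :=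
  ∀ X : Aᵒᵖ, SSet.KanComplex (F.obj X)

/-- A model structure on `P(A)` is the projective one if its weak equivalences and
fibrations are levelwise. -/
def IsProjective (M : ModelStructure (SmallPresheaf A)) : Prop :=
  M.weq = LevelwiseWeq ∧ M.fib = LevelwiseFib

/-- Evaluation `X^{Δ[1]} ⟶ X` at the vertex `i`, as a natural transformation. -/
def evAt (i : Fin 2) : ihom Δ[1] ⟶ 𝟭 SSet.{v} :=
  MonoidalClosed.pre (vertex i) ≫ MonoidalClosed.unitNatIso.inv

/-- The morphism `B^j : B^{Δ[1]} ⟶ B` of presheaves induced by `j : Δ[0] ⟶ Δ[1]`,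
`0 ↦ 0` (levelwise evaluation at the vertex `0`). -/
def cotensorEv (i : Fin 2) (B : Aᵒᵖ ⥤ SSet.{v}) : (B ⋙ ihom Δ[1]) ⟶ B :=
  Functor.whiskerLeft B (evAt i) ≫ B.rightUnitor.hom

/-- The Serre construction on a morphism of simplicial presheaves: the pullback of
`B^j : B^{Δ[1]} ⟶ B` along `f`. -/
def serre {A' B' : Aᵒᵖ ⥤ SSet.{v}} (f : A' ⟶ B') : Aᵒᵖ ⥤ SSet.{v} :=
  pullback f (cotensorEv 0 B')

/-- The projection `S(f) ⟶ B` of the Serre construction (evaluation at the other end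
of the cylinder). -/
def serreProj {A' B' : Aᵒᵖ ⥤ SSet.{v}} (f : A' ⟶ B') : serre f ⟶ B' :=
  (pullback.snd f (cotensorEv 0 B')) ≫ cotensorEv 1 B'

end Presheaves

end Paper
end
section
namespace Paper

/-! ### Simplicial model categories, locality, horns, localizations -/

section SimplicialModel

variable {K : Type u} [Category.{v} K] [SimplicialCategory K]

/-- A simplicial model structure: a model structure together with simplicial tensors
(with the usual adjunction to the enriched hom) satisfying Quillen's axiom SM7. -/
structure SimplicialModelStructure (K : Type u) [Category.{v} K] [SimplicialCategory K]
    extends ModelStructure K where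
  /-- the simplicial tensor bifunctor `S ⊗ X` -/
  tensor : SSet.{v} ⥤ K ⥤ K
  /-- the tensor adjunction `(S ⊗ X ⟶ Y) ≃ (S ⟶ sHom X Y)` -/
  tensorAdj : ∀ X : K, tensor.flip.obj X ⊣ (sHomFunctor K).obj (op X)
  /-- SM7, fibration part -/
  sm7_fib : ∀ ⦃A B X Y : K⦄ (i : A ⟶ B) (p : X ⟶ Y),
    cofib i → fib p → sFib (pullbackCorner i p)
  /-- SM7, triviality part -/
  sm7_triv : ∀ ⦃A B X Y : K⦄ (i : A ⟶ B) (p : X ⟶ Y),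
    cofib i → fib p → (weq i ∨ weq p) → WeakEquiv (pullbackCorner i p)

variable [HasTerminal K] [HasInitial K]

/-- An object `X` is `F`-local: it is fibrant and `hom(f, X)` is a weak equivalence of
simplicial sets for every `f ∈ F`. -/
def IsLocalObj (M : SimplicialModelStructure K) (F : MorphismProperty K) (X : K) : Prop :=
  IsFibrantObj M.toModelStructure X ∧
    ∀ ⦃A B : K⦄ (f : A ⟶ B), F f → WeakEquiv (sHomPre f X)

/-- `h'` is a cofibrant approximation of `h`: a morphism between cofibrant objects fitting
in a commutative square with `h` whose horizontal legs are weak equivalences. -/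
def IsCofibrantApprox (M : ModelStructure K) {A B A' B' : K}
    (h : A ⟶ B) (h' : A' ⟶ B') : Prop :=
  IsCofibrantObj M A' ∧ IsCofibrantObj M B' ∧
    ∃ (v : A ⟶ A') (w : B ⟶ B'), M.weq v ∧ M.weq w ∧ v ≫ h' = h ≫ w

/-- `h` is an `F`-local equivalence: `hom(h', X)` is a weak equivalence for every
`F`-local object `X`, where `h'` is a cofibrant approximation of `h`. -/
def IsLocalEquiv (M : SimplicialModelStructure K) (F : MorphismProperty K)
    {A B : K} (h : A ⟶ B) : Prop :=
  ∀ ⦃A' B' : K⦄ (h' : A' ⟶ B'), IsCofibrantApprox M.toModelStructure h h' →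
    ∀ X : K, IsLocalObj M F X → WeakEquiv (sHomPre h' X)

/-- The class of `F`-local equivalences. -/
def localEquiv (M : SimplicialModelStructure K) (F : MorphismProperty K) :
    MorphismProperty K :=
  fun _ _ h => IsLocalEquiv M F h

/-- The left Bousfield localization of `K` with respect to `F` exists: the cofibrations
of `K` and the `F`-local equivalences form a model structure on `K`. -/
def HasLeftBousfieldLocalization (M : SimplicialModelStructure K)
    (F : MorphismProperty K) : Prop :=
  ∃ M' : ModelStructure K, M'.cofib = M.cofib ∧ M'.weq = localEquiv M F

/-- An `F`-localization functor: a functor with `F`-local values together with a natural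
transformation `η : Id → L` such that each `η_X` is a cofibration and an `F`-local
equivalence. -/
structure LocalizationFunctor (M : SimplicialModelStructure K)
    (F : MorphismProperty K) where
  L : K ⥤ K
  η : 𝟭 K ⟶ L
  isLocal : ∀ X : K, IsLocalObj M F (L.obj X)
  η_cof : ∀ X : K, M.cofib (η.app X)
  η_leq : ∀ X : K, IsLocalEquiv M F (η.app X)

variable [HasColimitsOfSize.{v, v} K]

/-- The domain of the `f`-horn `h_{f,n}`: the pushout
`Δ[n] ⊗ A ⊔_{∂Δ[n] ⊗ A} ∂Δ[n] ⊗ B`. -/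
def hornDom (M : SimplicialModelStructure K) {A B : K} (f : A ⟶ B) (n : ℕ) : K :=
  pushout ((M.tensor.map (∂Δ[n].ι)).app A) ((M.tensor.obj ∂Δ[n]).map f)

/-- The `f`-horn `h_{f,n} : P_{f,n} ⟶ Δ[n] ⊗ B`. -/
def fHorn (M : SimplicialModelStructure K) {A B : K} (f : A ⟶ B) (n : ℕ) :
    hornDom M f n ⟶ (M.tensor.obj Δ[n]).obj B :=
  pushout.desc ((M.tensor.obj Δ[n]).map f) ((M.tensor.map (∂Δ[n].ι)).app B)
    ((M.tensor.map (∂Δ[n].ι)).naturality f).symm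

/-- The class `Hor(F)` of all `f`-horns, `f ∈ F`. -/
def hornClass (M : SimplicialModelStructure K) (F : MorphismProperty K) :
    MorphismProperty K :=
  fun _ _ g => ∃ (A B : K) (f : A ⟶ B) (n : ℕ),
    F f ∧ Arrow.mk g = Arrow.mk (fHorn M f n)

end SimplicialModel

/-! ### Cylinder functors and homotopy equivalences for weak factorization systems -/

section Cylinder

variable {K : Type u} [Category.{v} K] [HasBinaryCoproducts K]

/-- A cylinder functor for a weak factorization system `(L, R)`: a functorial
`(L, R)`-factorization `K + K ⟶ C(K) ⟶ K` of the codiagonal. -/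
structure CylinderFunctor (K : Type u) [Category.{v} K] [HasBinaryCoproducts K]
    (L R : MorphismProperty K) where
  C : K ⥤ K
  γ : ∀ X : K, (X ⨿ X : K) ⟶ C.obj X
  σ : C ⟶ 𝟭 K
  γ_natural : ∀ {X Y : K} (f : X ⟶ Y), coprod.map f f ≫ γ Y = γ X ≫ C.map f
  fact : ∀ X : K, γ X ≫ σ.app X = coprod.desc (𝟙 X) (𝟙 X)
  γ_mem : ∀ X : K, L (γ X)
  σ_mem : ∀ X : K, R (σ.app X)

/-- Elementary homotopy with respect to a cylinder functor. -/
def CylElemHomotopic (Cy : CylinderFunctor K L R) {X Y : K} (f g : X ⟶ Y) : Prop :=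
  ∃ h : Cy.C.obj X ⟶ Y, Cy.γ X ≫ h = coprod.desc f g

/-- The transitive hull `≈` of the homotopy relation `∼`. -/
def CylHomotopic (Cy : CylinderFunctor K L R) {X Y : K} (f g : X ⟶ Y) : Prop :=
  Relation.TransGen (fun f g : X ⟶ Y => CylElemHomotopic Cy f g) f g

/-- Homotopy equivalences with respect to the weak factorization system `(L, R)` with
cylinder functor `Cy`. -/
def IsCylHomotopyEquiv (Cy : CylinderFunctor K L R) {X Y : K} (f : X ⟶ Y) : Prop :=
  ∃ g : Y ⟶ X, CylHomotopic Cy (f ≫ g) (𝟙 X) ∧ CylHomotopic Cy (g ≫ f) (𝟙 Y)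

end Cylinder

/-! ### Finite colimits of a class of objects -/

/-- `X` is a finite (conical) colimit of objects from the class `S`. -/
def IsFiniteColimitOf {K : Type u} [Category.{v} K] (S : K → Prop) (X : K) : Prop :=
  ∃ (J : Type v) (_ : SmallCategory J) (_ : FinCategory J) (D : J ⥤ K) (c : Cocone D),
    Nonempty (IsColimit c) ∧ (∀ j, S (D.obj j)) ∧ Nonempty (c.pt ≅ X)

end Paper
end

section
namespace Paper

/-- A presheaf of the basic form `hom(-, a) ⊗ L` with `L` a finitely presentable
simplicial set (up to isomorphism). -/
def IsBasicGen {A : Type u} [Category.{v} A] [SimplicialCategory A]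
    (G : SmallPresheaf A) : Prop :=
  ∃ (a : A) (L : SSet.{v}), IsPresentable Cardinal.aleph0 L ∧
    Nonempty (G.obj ≅ representable a ⋙ tensorLeft L)

end Paper
end
namespace Paper

open CartesianMonoidalCategory in
/-- `ihom S` is a right adjoint, hence its product comparison maps are isomorphisms. -/
def ihomTensorLeftIso {C : Type u} [Category.{v} C] [CartesianMonoidalCategory C]
    [MonoidalClosed C] (S V : C) :
    tensorLeft V ⋙ ihom S ≅ ihom S ⋙ tensorLeft ((ihom S).obj V) :=
  asIso (prodComparisonNatTrans (ihom S) V)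

theorem statement6_general {A : Type u} [Category.{v} A] [SimplicialCategory A]
    [SCotensors A]
    (V : SSet.{v}) (B : A) (n : ℕ) :
    Nonempty
      (((representable B ⋙ tensorLeft V) ⋙ ihom Δ[n]) ≅
        (representable (SCotensors.cotensor Δ[n] B) ⋙ tensorLeft ((ihom Δ[n]).obj V))) :=
  ⟨Functor.associator _ _ _ ≪≫
    Functor.isoWhiskerLeft (representable B) (ihomTensorLeftIso Δ[n] V) ≪≫
    (Functor.associator _ _ _).symm ≪≫
    Functor.isoWhiskerRight (SCotensors.iso Δ[n] B).symm (tensorLeft ((ihom Δ[n]).obj V))⟩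

/-- Let `𝒜` be a complete simplicial category, `V` a finitely
presentable simplicial set, `B ∈ 𝒜` and `n ≥ 0`. Then in `P(𝒜)` there is an
isomorphism `(V ⊗ hom(−,B))^{Δ[n]} ≅ V^{Δ[n]} ⊗ hom(−, B^{Δ[n]})` (cotensors of
presheaves being computed pointwise via the internal hom of `SSet`). -/
theorem statement6 {A : Type u} [Category.{v} A] [SimplicialCategory A]
    [HasLimitsOfSize.{v, v} A] [SCotensors A]
    (V : SSet.{v}) (hV : IsPresentable Cardinal.aleph0 V) (B : A) (n : ℕ) :
    Nonempty
      (((representable B ⋙ tensorLeft V) ⋙ ihom Δ[n]) ≅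
        (representable (SCotensors.cotensor Δ[n] B) ⋙ tensorLeft ((ihom Δ[n]).obj V))) :=
  statement6_general V B n

end Paper
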